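/- Define X(z) = z·(32z² − 7·(1+4z)^{3/2} + 36z + 7) / (6·(1+4z)^{5/2}·(√(1+4z)+1)) for real z ∈ (−1/4, 1/4). Then X is real-analytic at 0, its Taylor coefficients at 0 of orders 0 and 1 vanish, and for every integer n ≥ 2 the n-th Taylor coefficient of X at 0 (i.e. X^{(n)}(0)/n!) equals (−1)^{n−1} · ( (1/2)·C(2n,n)·(n+1) − 2^{2n−1} − (1/6)·(2n−1)!/(n!·(n−2)!) ), where C(2n,n) denotes the central binomial coefficient. -/

import Mathlib

/-!
Near `0`, in terms of `s = √(1 + 4z)` (so `z = (s² - 1)/4`), the factor `s + 1` of the denominator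
cancels and `X` becomes the partial-fraction sum
`1/12 + (1/2)(1 + 4z)⁻¹ - (3/8)(1 + 4z)^(-1/2) - (5/24)(1 + 4z)^(-3/2)`.
Each power `(1 + 4z)^α` is analytic at `0` with `n`-th derivative `4ⁿ (α)ₙ` there (falling
factorial), and `(-1)ₙ`, `(-1/2)ₙ`, `(-3/2)ₙ` are `±n!` times `1`, `4⁻ⁿ C(2n, n)` and
`4⁻ⁿ (2n + 1) C(2n, n)`.
-/

/-- `X(z) = z(32z² − 7(1+4z)^{3/2} + 36z + 7) / (6(1+4z)^{5/2}(√(1+4z)+1))`. -/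
noncomputable def Xfun (z : ℝ) : ℝ :=
  z * (32 * z ^ 2 - 7 * (1 + 4 * z) ^ ((3 : ℝ) / 2) + 36 * z + 7)
    / (6 * (1 + 4 * z) ^ ((5 : ℝ) / 2) * (Real.sqrt (1 + 4 * z) + 1))

open Filter Topology Polynomial

lemma analyticAt_one_add_mul_rpow (c α : ℝ) :
    AnalyticAt ℝ (fun z : ℝ => (1 + c * z) ^ α) 0 := by
  have h : AnalyticAt ℝ (fun x : ℝ => (1 + x) ^ α) (c * 0) := by
    simpa using Real.one_add_rpow_hasFPowerSeriesAt_zero.analyticAt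
  exact h.comp (analyticAt_const.mul analyticAt_id)

lemma iteratedDeriv_add_mul_rpow (a c α : ℝ) (n : ℕ) {x : ℝ} (hx : 0 < a + c * x) :
    iteratedDeriv n (fun z : ℝ => (a + c * z) ^ α) x =
      c ^ n * (descPochhammer ℝ n).eval α * (a + c * x) ^ (α - n) := by
  induction n generalizing x with
  | zero => simp
  | succ n ih =>
    have hev : iteratedDeriv n (fun z : ℝ => (a + c * z) ^ α) =ᶠ[𝓝 x]
        fun z => c ^ n * (descPochhammer ℝ n).eval α * (a + c * z) ^ (α - n) := by
      filter_upwards [(continuous_const.add (continuous_const.mul continuous_id)).isOpen_preimage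
        _ isOpen_Ioi |>.mem_nhds hx] with z hz using ih hz
    have hderiv : HasDerivAt (fun z : ℝ => a + c * z) c x := by
      simpa using ((hasDerivAt_id x).const_mul c).const_add a
    rw [iteratedDeriv_succ, hev.deriv_eq,
      ((hderiv.rpow_const (Or.inl hx.ne')).const_mul _).deriv, descPochhammer_succ_eval]
    push_cast
    rw [sub_sub]
    ring

lemma eval_descPochhammer_neg_one (n : ℕ) :
    (descPochhammer ℝ n).eval (-1) = (-1) ^ n * n.factorial := by
  induction n with
  | zero => simp
  | succ n ih =>
    rw [descPochhammer_succ_eval, ih, Nat.factorial_succ]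
    push_cast
    ring

lemma four_pow_mul_eval_descPochhammer_neg_half (n : ℕ) :
    4 ^ n * (descPochhammer ℝ n).eval (-1 / 2) = (-1) ^ n * n.factorial * n.centralBinom := by
  induction n with
  | zero => simp
  | succ n ih =>
    have hC : ((n + 1 : ℕ) : ℝ) * (n + 1).centralBinom = 2 * (2 * n + 1) * n.centralBinom := by
      exact_mod_cast Nat.succ_mul_centralBinom_succ n
    rw [descPochhammer_succ_eval, Nat.factorial_succ]
    push_cast at hC ⊢
    linear_combination (-(4 * n + 2) : ℝ) * ih - (-1 : ℝ) ^ (n + 1) * n.factorial * hC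

lemma four_pow_mul_eval_descPochhammer_neg_three_halves (n : ℕ) :
    4 ^ n * (descPochhammer ℝ n).eval (-3 / 2) =
      (-1) ^ n * (2 * n + 1) * n.factorial * n.centralBinom := by
  have h := four_pow_mul_eval_descPochhammer_neg_half (n + 1)
  have hC : ((n + 1 : ℕ) : ℝ) * (n + 1).centralBinom = 2 * (2 * n + 1) * n.centralBinom := by
    exact_mod_cast Nat.succ_mul_centralBinom_succ n
  -- `(α)ₙ₊₁ = α (α - 1)ₙ` at `α = -1/2`
  rw [descPochhammer_succ_left, eval_mul, eval_comp, Nat.factorial_succ] at h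
  push_cast at h hC ⊢
  norm_num at h ⊢
  linear_combination (-1 / 2 : ℝ) * h + (-1 : ℝ) ^ n * n.factorial / 2 * hC

lemma factorial_two_mul_sub_one_div {n : ℕ} (hn : 2 ≤ n) :
    ((2 * n - 1).factorial : ℝ) / (n.factorial * (n - 2).factorial) =
      (n - 1) / 2 * n.centralBinom := by
  obtain ⟨m, rfl⟩ := Nat.exists_eq_add_of_le' hn
  have hC : ((m + 2).centralBinom : ℝ) * (m + 2).factorial * (m + 2).factorial =
      (2 * (m + 2)).factorial := by
    rw [Nat.centralBinom, ← Nat.choose_mul_factorial_mul_factorial (by omega : m + 2 ≤ 2 * (m + 2)),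
      show 2 * (m + 2) - (m + 2) = m + 2 by omega]
    push_cast
    ring
  have h2m : ((2 * (m + 2)).factorial : ℝ) = (2 * m + 4) * (2 * m + 3).factorial := by
    rw [show 2 * (m + 2) = 2 * m + 3 + 1 by omega, Nat.factorial_succ]
    push_cast
    ring
  have hm : ((m + 2).factorial : ℝ) = (m + 2) * (m + 1) * m.factorial := by
    rw [Nat.factorial_succ, Nat.factorial_succ]
    push_cast
    ring
  rw [show 2 * (m + 2) - 1 = 2 * m + 3 by omega, Nat.add_sub_cancel]
  rw [h2m, hm] at hC
  rw [hm, div_eq_iff (by positivity)]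
  apply mul_left_cancel₀ (show (m + 2 : ℝ) ≠ 0 by positivity)
  push_cast
  linear_combination -hC / 2

noncomputable def xfunPartialFraction (z : ℝ) : ℝ :=
  1 / 12 + 1 / 2 * (1 + 4 * z) ^ (-1 : ℝ) - 3 / 8 * (1 + 4 * z) ^ ((-1 : ℝ) / 2)
    - 5 / 24 * (1 + 4 * z) ^ ((-3 : ℝ) / 2)

lemma partialFraction_sqrt_substitution {s : ℝ} (hs : 0 < s) :
    (s ^ 2 - 1) / 4 * (32 * ((s ^ 2 - 1) / 4) ^ 2 - 7 * s ^ 3 + 36 * ((s ^ 2 - 1) / 4) + 7)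
        / (6 * s ^ 5 * (s + 1)) =
      1 / 12 + 1 / 2 * (s ^ 2)⁻¹ - 3 / 8 * s⁻¹ - 5 / 24 * (s ^ 3)⁻¹ := by
  field_simp
  ring

lemma Xfun_eq_xfunPartialFraction {z : ℝ} (hz : -(1 / 4) < z) :
    Xfun z = xfunPartialFraction z := by
  have hu : 0 ≤ 1 + 4 * z := by linarith
  have hs : 0 < √(1 + 4 * z) := Real.sqrt_pos.mpr (by linarith)
  have hz' : z = (√(1 + 4 * z) ^ 2 - 1) / 4 := by rw [Real.sq_sqrt hu]; ring
  have key := partialFraction_sqrt_substitution hs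
  rw [← hz', Real.sq_sqrt hu] at key
  rw [Xfun, xfunPartialFraction, Real.rpow_neg_one]
  simp only [Real.rpow_div_two_eq_sqrt _ hu]
  simpa [Real.rpow_neg hs.le] using key

lemma analyticAt_xfunPartialFraction : AnalyticAt ℝ xfunPartialFraction 0 :=
  ((analyticAt_const.add (analyticAt_const.mul (analyticAt_one_add_mul_rpow 4 _))).sub
    (analyticAt_const.mul (analyticAt_one_add_mul_rpow 4 _))).sub
    (analyticAt_const.mul (analyticAt_one_add_mul_rpow 4 _))

lemma iteratedDeriv_xfunPartialFraction_zero {n : ℕ} (hn : 0 < n) :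
    iteratedDeriv n xfunPartialFraction 0 =
      (-1) ^ n * n.factorial * (4 ^ n / 2 - (5 * n + 7) / 12 * n.centralBinom) := by
  have hcont (α : ℝ) := (analyticAt_one_add_mul_rpow 4 α).contDiffAt (n := n)
  have hD (α : ℝ) := iteratedDeriv_add_mul_rpow 1 4 α n (x := 0) (by norm_num)
  simp only [mul_zero, add_zero, Real.one_rpow, mul_one] at hD
  unfold xfunPartialFraction
  rw [iteratedDeriv_fun_sub (by fun_prop) (by fun_prop),
    iteratedDeriv_fun_sub (by fun_prop) (by fun_prop), iteratedDeriv_const_add hn]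
  simp only [iteratedDeriv_const_mul_field, hD]
  linear_combination (1 / 2 * 4 ^ n : ℝ) * eval_descPochhammer_neg_one n
    - 3 / 8 * four_pow_mul_eval_descPochhammer_neg_half n
    - 5 / 24 * four_pow_mul_eval_descPochhammer_neg_three_halves n

theorem taylor_coeff_Xfun :
    AnalyticAt ℝ Xfun 0 ∧
    iteratedDeriv 0 Xfun 0 = 0 ∧
    iteratedDeriv 1 Xfun 0 = 0 ∧
    ∀ n : ℕ, 2 ≤ n →
      iteratedDeriv n Xfun 0 / (n.factorial : ℝ) =
        (-1 : ℝ) ^ (n - 1) *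
          ((1 / 2) * (Nat.choose (2 * n) n : ℝ) * ((n : ℝ) + 1) - (2 : ℝ) ^ (2 * n - 1)
            - (1 / 6) * ((2 * n - 1).factorial : ℝ)
                / ((n.factorial : ℝ) * ((n - 2).factorial : ℝ))) := by
  have hX : Xfun =ᶠ[𝓝 0] xfunPartialFraction := by
    filter_upwards [eventually_gt_nhds (by norm_num : (-(1 / 4) : ℝ) < 0)] with z hz
    exact Xfun_eq_xfunPartialFraction hz
  refine ⟨analyticAt_xfunPartialFraction.congr hX.symm, by simp [Xfun], ?_, fun n hn => ?_⟩
  · rw [hX.iteratedDeriv_eq, iteratedDeriv_xfunPartialFraction_zero one_pos]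
    norm_num [Nat.centralBinom]
  · rw [hX.iteratedDeriv_eq, iteratedDeriv_xfunPartialFraction_zero (by omega), mul_div_assoc,
      ← Nat.centralBinom, mul_div_assoc (1 / 6 : ℝ), factorial_two_mul_sub_one_div hn]
    obtain ⟨m, rfl⟩ := Nat.exists_eq_add_of_le' hn
    have h4 : (2 : ℝ) ^ (2 * (m + 2) - 1) = 4 ^ (m + 2) / 2 := by
      rw [show 2 * (m + 2) - 1 = 2 * m + 3 by omega, pow_add, pow_mul, pow_add]
      ring
    rw [h4, show m + 2 - 1 = m + 1 by omega, pow_succ]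
    field_simp
    push_cast
    ring
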